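/- Let X be a pre-Riesz space with dim X = n < ∞. If there exist n pairwise distinct band projections of rank 1 on X, then X is linearly order isomorphic to ℝⁿ equipped with the standard (componentwise) order; that is, there is a linear bijection J : X → ℝⁿ such that x ≤ y in X if and only if J x ≤ J y componentwise. -/

import Mathlib

open Pointwise

variable {X : Type*} [AddCommGroup X] [PartialOrder X] [IsOrderedAddMonoid X] [Module ℝ X] [PosSMulStrictMono ℝ X]

/-- Two elements of an ordered vector space are disjoint if the sets `{x+y, -x-y}` and
`{x-y, y-x}` have the same set of upper bounds. -/
def UDisjoint (x y : X) : Prop :=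
  upperBounds ({x + y, -x - y} : Set X) = upperBounds ({x - y, y - x} : Set X)

/-- The disjoint complement `S^⊥` of a set `S`. -/
def dComp (S : Set X) : Set X := {x : X | ∀ s ∈ S, UDisjoint x s}

/-- A band: a set equal to its double disjoint complement. -/
def IsBand (B : Set X) : Prop := B = dComp (dComp B)

/-- A projection band: a band `B` with `B ∩ B^⊥ = {0}` and `B + B^⊥ = X`. -/
def IsProjBand (B : Set X) : Prop :=
  IsBand B ∧ B ∩ dComp B = {0} ∧ ∀ x : X, ∃ b ∈ B, ∃ c ∈ dComp B, x = b + c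

/-- A positive linear operator. -/
def IsPosMap (T : X →ₗ[ℝ] X) : Prop := ∀ x : X, 0 ≤ x → 0 ≤ T x

/-- A band projection: a linear projection whose range is a projection band and whose
kernel is the disjoint complement of the range. -/
def IsBandProj (P : X →ₗ[ℝ] X) : Prop :=
  P ∘ₗ P = P ∧ IsProjBand (Set.range ⇑P) ∧ (LinearMap.ker P : Set X) = dComp (Set.range ⇑P)

/-- A pre-Riesz space: for every nonempty finite `A ⊆ X` and every `x`, if the upper bounds
of `x + A` are contained in the upper bounds of `A`, then `x ≥ 0`. -/
def IsPreRiesz (X : Type*) [AddCommGroup X] [PartialOrder X] [IsOrderedAddMonoid X] [Module ℝ X] [PosSMulStrictMono ℝ X] : Prop :=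
  ∀ (A : Set X) (x : X), A.Finite → A.Nonempty →
    upperBounds ((x + ·) '' A) ⊆ upperBounds A → 0 ≤ x

/-!
A band projection `P` satisfies `P x ⊥ x - P x`, and in a pre-Riesz space a nonnegative sum of
disjoint elements has nonnegative summands; so `0 ≤ P x ≤ x` for `x ≥ 0`, and each rank-one range is
spanned by a positive vector `e i`. If `P ≠ Q` are rank-one band projections and `0 ≤ f ∈ range Q`,
then `0 ≤ P f ≤ f` squeezes `Q (P f) = P f`, so `P f` lies in both ranges and must vanish. Hence
`P i (e j) = δᵢⱼ e j`: the `e i` form a basis, `P i x = xᵢ • e i`, and `x ≥ 0` iff all coordinates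
`xᵢ` are nonnegative.
-/

section

variable {K V ι : Type*} [AddCommGroup V] [DecidableEq ι]

theorem linearIndependent_of_apply_eq_ite [Fintype ι] [DivisionRing K] [Module K V]
    (P : ι → V →ₗ[K] V) {e : ι → V} (hPe : ∀ i j, P i (e j) = if i = j then e j else 0)
    (he : ∀ i, e i ≠ 0) :
    LinearIndependent K e := by
  refine Fintype.linearIndependent_iff.2 fun g hg i => ?_
  have hPg := congrArg (P i) hg
  simp only [map_sum, map_smul, hPe, smul_ite, smul_zero, Finset.sum_ite_eq, Finset.mem_univ,
    if_true, map_zero] at hPg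
  exact (smul_eq_zero.1 hPg).resolve_right (he i)

theorem Module.Basis.apply_eq_repr_smul_of_apply_eq_ite [CommSemiring K] [Module K V]
    (b : Module.Basis ι K V) (P : ι → V →ₗ[K] V)
    (hPb : ∀ i j, P i (b j) = if i = j then b j else 0) (i : ι) (x : V) :
    P i x = b.repr x i • b i := by
  have hP : P i = (b.coord i).smulRight (b i) := b.ext fun j => by
    by_cases hij : i = j
    · subst hij; simp [hPb]
    · simp [hPb, hij, Finsupp.single_eq_of_ne hij]
  rw [hP]
  rfl

end

theorem le_iff_le_of_nonneg_iff {E F G : Type*} [AddCommGroup E] [PartialOrder E]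
    [IsOrderedAddMonoid E] [AddCommGroup F] [PartialOrder F] [IsOrderedAddMonoid F]
    [FunLike G E F] [AddMonoidHomClass G E F] (J : G) (h : ∀ z, 0 ≤ z ↔ 0 ≤ J z) (x y : E) :
    x ≤ y ↔ J x ≤ J y := by
  rw [← sub_nonneg, h, map_sub, sub_nonneg]

theorem UDisjoint.symm {x y : X} (h : UDisjoint x y) : UDisjoint y x := by
  unfold UDisjoint at *
  rwa [Set.pair_comm (y - x), add_comm y, sub_eq_add_neg (-y), add_comm (-y), ← sub_eq_add_neg]

namespace IsPreRiesz

/-- The pre-Riesz property is applied to `A = {b - c, c - b}` and the shift `b + b`: every upper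
bound of `b + b + A` dominates `b + c ≥ 0 ≥ -b - c`, hence bounds `{b + c, -b - c}`, hence `A`. -/
theorem nonneg_left_of_uDisjoint (hX : IsPreRiesz X) {b c : X} (h : UDisjoint b c)
    (hbc : 0 ≤ b + c) : 0 ≤ b := by
  have h2b : 0 ≤ (2 : ℝ) • b := by
    rw [two_smul]
    refine hX {b - c, c - b} (b + b) (Set.toFinite _) ⟨_, Or.inl rfl⟩ fun u hu => ?_
    have hu' : b + c ≤ u := by
      simpa [add_sub_cancel] using hu ⟨c - b, Or.inr rfl, rfl⟩
    rw [← h]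
    rintro z (rfl | rfl)
    · exact hu'
    · exact ((neg_add' b c ▸ neg_nonpos.2 hbc).trans hbc).trans hu'
  exact nonneg_of_smul_nonneg_of_pos_left h2b two_pos

/-- If `0` and `a` had no common upper bound, the pre-Riesz implication would hold vacuously for
`A = {0, a}` and every shift, making every element nonnegative. -/
theorem exists_nonneg_ge (hX : IsPreRiesz X) (a : X) : ∃ u, 0 ≤ u ∧ a ≤ u := by
  by_contra! h
  have hall : ∀ y : X, 0 ≤ y := fun y =>
    hX {0, a} y (Set.toFinite _) ⟨0, Or.inl rfl⟩ fun u hu => absurd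
      (le_sub_iff_add_le'.2 (hu (Set.mem_image_of_mem _ (Or.inr rfl))))
      (h (u - y) (sub_nonneg.2 (by simpa using hu (Set.mem_image_of_mem _ (Or.inl rfl)))))
  exact h 0 le_rfl (neg_nonneg.1 (hall (-a)))

end IsPreRiesz

namespace IsBandProj

variable {P Q : X →ₗ[ℝ] X}

theorem apply_of_mem_range (hP : IsBandProj P) {v : X} (hv : v ∈ LinearMap.range P) :
    P v = v := by
  obtain ⟨w, rfl⟩ := hv
  exact LinearMap.congr_fun hP.1 w

theorem sub_apply_mem_ker (hP : IsBandProj P) (x : X) : x - P x ∈ LinearMap.ker P := by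
  rw [LinearMap.mem_ker, map_sub, hP.apply_of_mem_range (LinearMap.mem_range_self P x), sub_self]

theorem uDisjoint_apply_sub_apply (hP : IsBandProj P) (x : X) : UDisjoint (P x) (x - P x) := by
  have hx : x - P x ∈ dComp (Set.range P) := hP.2.2 ▸ hP.sub_apply_mem_ker x
  exact (hx _ ⟨x, rfl⟩).symm

theorem nonneg_apply (hX : IsPreRiesz X) (hP : IsBandProj P) {x : X} (hx : 0 ≤ x) :
    0 ≤ P x :=
  hX.nonneg_left_of_uDisjoint (hP.uDisjoint_apply_sub_apply x) (by rwa [add_sub_cancel])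

theorem apply_le (hX : IsPreRiesz X) (hP : IsBandProj P) {x : X} (hx : 0 ≤ x) : P x ≤ x :=
  sub_nonneg.1 <| hX.nonneg_left_of_uDisjoint (hP.uDisjoint_apply_sub_apply x).symm
    (by rwa [sub_add_cancel])

theorem eq_of_range_eq (hP : IsBandProj P) (hQ : IsBandProj Q)
    (h : LinearMap.range P = LinearMap.range Q) : P = Q := by
  have hker : LinearMap.ker P = LinearMap.ker Q := SetLike.coe_injective <| by
    rw [hP.2.2, hQ.2.2, ← LinearMap.coe_range, h, LinearMap.coe_range]
  ext x
  have hPx : P x ∈ LinearMap.range Q := h ▸ LinearMap.mem_range_self P x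
  have hx := hker ▸ hP.sub_apply_mem_ker x
  rw [LinearMap.mem_ker, map_sub, hQ.apply_of_mem_range hPx, sub_eq_zero] at hx
  exact hx.symm

/-- Write a nonzero `v` in the range as `P u - P (u - v)` with `u ≥ 0, v`. -/
theorem exists_nonneg_mem_range (hX : IsPreRiesz X) (hP : IsBandProj P)
    (h : LinearMap.range P ≠ ⊥) : ∃ e ∈ LinearMap.range P, 0 ≤ e ∧ e ≠ 0 := by
  obtain ⟨v, hv, hv0⟩ := Submodule.exists_mem_ne_zero_of_ne_bot h
  obtain ⟨u, hu0, hvu⟩ := hX.exists_nonneg_ge v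
  by_cases hPu : P u = 0
  · refine ⟨P (u - v), LinearMap.mem_range_self P _, hP.nonneg_apply hX (sub_nonneg.2 hvu), ?_⟩
    rwa [map_sub, hPu, hP.apply_of_mem_range hv, zero_sub, neg_ne_zero]
  · exact ⟨P u, LinearMap.mem_range_self P u, hP.nonneg_apply hX hu0, hPu⟩

/-- Since `0 ≤ P f ≤ f = Q f`, both `P f - Q (P f)` and `Q (P f) - P f` are nonnegative. -/
theorem apply_mem_range_of_nonneg (hX : IsPreRiesz X) (hP : IsBandProj P) (hQ : IsBandProj Q)
    {f : X} (hf : f ∈ LinearMap.range Q) (hf0 : 0 ≤ f) : P f ∈ LinearMap.range Q := by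
  have h₁ : Q (P f) ≤ P f := hQ.apply_le hX (hP.nonneg_apply hX hf0)
  have h₂ : Q (f - P f) ≤ f - P f := hQ.apply_le hX (sub_nonneg.2 (hP.apply_le hX hf0))
  rw [map_sub, hQ.apply_of_mem_range hf, sub_le_sub_iff_left] at h₂
  exact ⟨P f, le_antisymm h₁ h₂⟩

theorem apply_eq_zero_of_ne (hX : IsPreRiesz X) (hP : IsBandProj P) (hQ : IsBandProj Q)
    (hPQ : P ≠ Q) (hrP : Module.finrank ℝ (LinearMap.range P) = 1)
    (hrQ : Module.finrank ℝ (LinearMap.range Q) = 1) {f : X} (hf : f ∈ LinearMap.range Q)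
    (hf0 : 0 ≤ f) : P f = 0 := by
  by_contra hne
  have hspan : ∀ U : Submodule ℝ X, Module.finrank ℝ U = 1 → P f ∈ U → ℝ ∙ P f = U :=
    fun U hU hfU => haveI := Module.finite_of_finrank_eq_succ hU
      Submodule.eq_of_le_of_finrank_eq ((Submodule.span_singleton_le_iff_mem _ _).2 hfU)
        (by rw [finrank_span_singleton hne, hU])
  exact hPQ <| hP.eq_of_range_eq hQ <| (hspan _ hrP (LinearMap.mem_range_self P f)).symm.trans
    (hspan _ hrQ (hP.apply_mem_range_of_nonneg hX hQ hf hf0))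

end IsBandProj

theorem stmt_16 (hX : IsPreRiesz X) [FiniteDimensional ℝ X]
    (P : Fin (Module.finrank ℝ X) → (X →ₗ[ℝ] X)) (hinj : Function.Injective P)
    (hP : ∀ i, IsBandProj (P i))
    (hrank : ∀ i, Module.finrank ℝ (LinearMap.range (P i)) = 1) :
    ∃ J : X ≃ₗ[ℝ] (Fin (Module.finrank ℝ X) → ℝ), ∀ x y : X, x ≤ y ↔ J x ≤ J y := by
  have hne_bot : ∀ i, LinearMap.range (P i) ≠ ⊥ := fun i h =>
    zero_ne_one ((finrank_bot ℝ X).symm.trans (h ▸ hrank i))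
  choose e he_mem he0 hne using fun i => (hP i).exists_nonneg_mem_range hX (hne_bot i)
  have hPe : ∀ i j, P i (e j) = if i = j then e j else 0 := by
    intro i j
    split_ifs with hij
    · exact hij ▸ (hP i).apply_of_mem_range (he_mem i)
    · exact (hP i).apply_eq_zero_of_ne hX (hP j) (hinj.ne hij) (hrank i) (hrank j) (he_mem j)
        (he0 j)
  let b := basisOfLinearIndependentOfCardEqFinrank' e
    (linearIndependent_of_apply_eq_ite P hPe hne) (Fintype.card_fin _)
  have hb : ⇑b = e := coe_basisOfLinearIndependentOfCardEqFinrank' ..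
  have hPb : ∀ i x, P i x = b.repr x i • e i :=
    hb ▸ b.apply_eq_repr_smul_of_apply_eq_ite P (hb ▸ hPe)
  refine ⟨b.equivFun, le_iff_le_of_nonneg_iff b.equivFun fun z => ⟨fun hz i => ?_, fun hz => ?_⟩⟩
  · exact nonneg_of_smul_nonneg_of_pos_right (hPb i z ▸ (hP i).nonneg_apply hX hz)
      ((he0 i).lt_of_ne' (hne i))
  · rw [← b.sum_repr z]
    exact Finset.sum_nonneg fun i _ => smul_nonneg (hz i) (hb ▸ he0 i)
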